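/- arXiv:1404.6766 — 2 statements merged into one kernel-verified Lean document; each statement's English description precedes it below -/
import Mathlib

section
/- Let (t_{s,j}) be a solution of the system (dist)–(ne2), and for each j let d_j be the number of indices s with t_{s,j} > 0 (so t_{s,j} > 0 exactly for s ≤ d_j). Then the thresholds are monotone: d_j ≥ d_{j+1} for every j ∈ {1,…,n−1}. -/
/-- Probability of at least `m` successes in `l-1` Bernoulli(x) trials. -/
noncomputable def w (l m : ℕ) (x : ℝ) : ℝ :=
  ∑ i ∈ Finset.Icc m (l - 1), ((l - 1).choose i : ℝ) * x ^ i * (1 - x) ^ (l - 1 - i)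

/-- `W x = 1 - w x`. -/
noncomputable def W (l m : ℕ) (x : ℝ) : ℝ := 1 - w l m x

/-- `γ_{s,j} = ∑_{k=j}^n t_{s,k} q_k`. -/
noncomputable def gam (n : ℕ) (q : ℕ → ℝ) (t : ℕ → ℕ → ℝ) (s j : ℕ) : ℝ :=
  ∑ k ∈ Finset.Icc j n, t s k * q k

/-- `(t_{s,j})` is a solution of the system (dist)–(ne2). -/
def IsSolution (l m d n : ℕ) (M q : ℕ → ℝ) (t : ℕ → ℕ → ℝ) : Prop :=
  (∀ s ∈ Finset.Icc 1 d, ∀ j ∈ Finset.Icc 1 n, 0 ≤ t s j) ∧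
  ∀ j ∈ Finset.Icc 1 n,
    (∑ s ∈ Finset.Icc 1 d, t s j) = 1 ∧
    ∃ dj ∈ Finset.Icc 1 d,
      (∀ s ∈ Finset.Icc 1 d, s ≤ dj → 0 < t s j) ∧
      (∀ s ∈ Finset.Icc 1 d, dj < s → t s j = 0) ∧
      (∀ s ∈ Finset.Icc 1 dj,
        M s * W l m (gam n q t s j) = M 1 * W l m (gam n q t 1 j)) ∧
      (∀ s, dj ≤ s → s < d →
        M (s + 1) * W l m (gam n q t (s + 1) j) ≤ M s * W l m (gam n q t s j))

/-!
Suppose `d_j < d_{j+1}` and put `s = d_j + 1`. Then `t_{s,j} = 0`, so `γ_{s,j} = γ_{s,j+1}`, and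
chaining the equalities at `j + 1`, the inequality at `j` and the equalities at `j` gives
`M_1 W(γ_{1,j+1}) = M_s W(γ_{s,j}) ≤ M_{d_j} W(γ_{d_j,j}) = M_1 W(γ_{1,j})`.
But `γ_{1,j} = t_{1,j} q_j + γ_{1,j+1} > γ_{1,j+1}`, all `γ` lie in `[0,1]`, and `W` is strictly
decreasing there since `w'(x) = m C(l-1,m) x^(m-1) (1-x)^(l-1-m)`.
-/

open Finset

/-- The derivative of the binomial term `C(L,i) xⁱ (1-x)^(L-i)` is
`binomialFlux L i x - binomialFlux L (i+1) x`, so the derivative of a tail sum telescopes. -/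
noncomputable def binomialFlux (L i : ℕ) (x : ℝ) : ℝ :=
  (i * L.choose i : ℕ) * x ^ (i - 1) * (1 - x) ^ (L - i)

lemma hasDerivAt_choose_mul_pow_mul_one_sub_pow (L i : ℕ) (x : ℝ) :
    HasDerivAt (fun y : ℝ => (L.choose i : ℝ) * y ^ i * (1 - y) ^ (L - i))
      (binomialFlux L i x - binomialFlux L (i + 1) x) x := by
  have hchoose : ((L.choose (i + 1) : ℕ) : ℝ) * (i + 1) = L.choose i * (L - i : ℕ) := by
    exact_mod_cast Nat.choose_succ_right_eq L i
  refine (((hasDerivAt_pow i x).const_mul (L.choose i : ℝ)).mul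
    (((hasDerivAt_id' x).const_sub 1).fun_pow (L - i))).congr_deriv ?_
  rw [binomialFlux, binomialFlux, Nat.add_sub_cancel, Nat.sub_add_eq]
  push_cast
  linear_combination (x ^ i * (1 - x) ^ (L - i - 1)) * hchoose

lemma hasDerivAt_w {l m : ℕ} (hml : m ≤ l - 1) (x : ℝ) :
    HasDerivAt (w l m) (binomialFlux (l - 1) m x) x := by
  have h := HasDerivAt.fun_sum (u := Icc m (l - 1))
    fun i _ => hasDerivAt_choose_mul_pow_mul_one_sub_pow (l - 1) i x
  have htel : ∑ i ∈ Icc m (l - 1), (binomialFlux (l - 1) i x - binomialFlux (l - 1) (i + 1) x)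
      = binomialFlux (l - 1) m x := by
    rw [← neg_inj, ← sum_neg_distrib]
    simp only [neg_sub]
    rw [sum_Icc_sub hml (fun i => binomialFlux (l - 1) i x)]
    simp [binomialFlux, Nat.choose_succ_self]
  rwa [htel] at h

lemma w_strictMonoOn {l m : ℕ} (hm : 1 ≤ m) (hml : m ≤ l - 1) :
    StrictMonoOn (w l m) (Set.Icc 0 1) := by
  apply strictMonoOn_of_deriv_pos (convex_Icc 0 1)
  · exact fun x _ => (hasDerivAt_w hml x).continuousAt.continuousWithinAt
  · intro x hx
    rw [interior_Icc, Set.mem_Ioo] at hx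
    rw [(hasDerivAt_w hml x).deriv, binomialFlux]
    have hc : (0 : ℝ) < (m * (l - 1).choose m : ℕ) := by
      exact_mod_cast Nat.mul_pos hm (Nat.choose_pos hml)
    exact mul_pos (mul_pos hc (pow_pos hx.1 _)) (pow_pos (sub_pos.2 hx.2) _)

lemma W_strictAntiOn {l m : ℕ} (hm : 1 ≤ m) (hml : m ≤ l - 1) :
    StrictAntiOn (W l m) (Set.Icc 0 1) :=
  fun _ ha _ hb hab => sub_lt_sub_left (w_strictMonoOn hm hml ha hb hab) 1

lemma filter_Icc_pos_eq_Icc {f : ℕ → ℝ} {d k : ℕ} (hk : k ≤ d)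
    (hpos : ∀ s ∈ Icc 1 d, s ≤ k → 0 < f s) (hzero : ∀ s ∈ Icc 1 d, k < s → f s = 0) :
    (Icc 1 d).filter (fun s => 0 < f s) = Icc 1 k := by
  ext s
  simp only [mem_filter, mem_Icc]
  constructor
  · rintro ⟨hs, hfs⟩
    refine ⟨hs.1, not_lt.1 fun hks => hfs.ne' (hzero s (mem_Icc.2 hs) hks)⟩
  · rintro ⟨h1, hsk⟩
    exact ⟨⟨h1, hsk.trans hk⟩, hpos s (mem_Icc.2 ⟨h1, hsk.trans hk⟩) hsk⟩

lemma gam_eq_mul_add_gam_succ {n j : ℕ} (q : ℕ → ℝ) (t : ℕ → ℕ → ℝ) (s : ℕ) (hjn : j ≤ n) :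
    gam n q t s j = t s j * q j + gam n q t s (j + 1) := by
  rw [gam, gam, ← add_sum_Ioc_eq_sum_Icc hjn, Icc_add_one_left_eq_Ioc]

lemma gam_succ_lt_gam {n j s : ℕ} {q : ℕ → ℝ} {t : ℕ → ℕ → ℝ} (hjn : j ≤ n)
    (ht : 0 < t s j) (hq : 0 < q j) : gam n q t s (j + 1) < gam n q t s j := by
  rw [gam_eq_mul_add_gam_succ q t s hjn]
  linarith [mul_pos ht hq]

lemma IsSolution.gam_mem_Icc {l m d n s j : ℕ} {M q : ℕ → ℝ} {t : ℕ → ℕ → ℝ}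
    (hsol : IsSolution l m d n M q t) (hq : ∀ k ∈ Icc 1 n, 0 ≤ q k)
    (hqsum : ∑ k ∈ Icc 1 n, q k ≤ 1) (hs : s ∈ Icc 1 d) (hj : 1 ≤ j) :
    gam n q t s j ∈ Set.Icc 0 1 := by
  have hsub : Icc j n ⊆ Icc 1 n := Icc_subset_Icc_left hj
  have ht_le_one : ∀ k ∈ Icc 1 n, t s k ≤ 1 := fun k hk =>
    (hsol.2 k hk).1 ▸ single_le_sum (fun s' hs' => hsol.1 s' hs' k hk) hs
  constructor
  · exact sum_nonneg fun k hk => mul_nonneg (hsol.1 s hs k (hsub hk)) (hq k (hsub hk))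
  · calc gam n q t s j ≤ ∑ k ∈ Icc j n, q k :=
          sum_le_sum fun k hk => mul_le_of_le_one_left (hq k (hsub hk)) (ht_le_one k (hsub hk))
      _ ≤ ∑ k ∈ Icc 1 n, q k := sum_le_sum_of_subset_of_nonneg hsub fun k hk _ => hq k hk
      _ ≤ 1 := hqsum

theorem stmt2_general (l m d n : ℕ) (hm : 1 ≤ m) (hml : m ≤ l - 1)
    (M q : ℕ → ℝ)
    (hMpos : ∀ s ∈ Finset.Icc 1 d, 0 < M s)
    (hq : ∀ j ∈ Finset.Icc 1 n, 0 < q j)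
    (hqsum : ∑ j ∈ Finset.Icc 1 n, q j < 1)
    (t : ℕ → ℕ → ℝ) (hsol : IsSolution l m d n M q t)
    (j : ℕ) (hj : 1 ≤ j) (hjn : j + 1 ≤ n) :
    ((Finset.Icc 1 d).filter (fun s => 0 < t s (j + 1))).card ≤
      ((Finset.Icc 1 d).filter (fun s => 0 < t s j)).card := by
  obtain ⟨-, dj, hdj, hpos, hzero, heq, hchain⟩ := hsol.2 j (mem_Icc.2 ⟨hj, by omega⟩)
  obtain ⟨-, dj', hdj', hpos', hzero', heq', -⟩ := hsol.2 (j + 1) (mem_Icc.2 ⟨by omega, hjn⟩)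
  rw [mem_Icc] at hdj hdj'
  rw [filter_Icc_pos_eq_Icc hdj.2 hpos hzero, filter_Icc_pos_eq_Icc hdj'.2 hpos' hzero',
    Nat.card_Icc, Nat.card_Icc]
  by_contra! hlt
  have h1 : 1 ∈ Icc 1 d := mem_Icc.2 ⟨le_rfl, by omega⟩
  have hγ_mem : ∀ j', 1 ≤ j' → gam n q t 1 j' ∈ Set.Icc 0 1 :=
    fun _ => hsol.gam_mem_Icc (fun k hk => (hq k hk).le) hqsum.le h1
  have hW : W l m (gam n q t 1 j) < W l m (gam n q t 1 (j + 1)) :=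
    W_strictAntiOn hm hml (hγ_mem _ (by omega)) (hγ_mem j hj)
      (gam_succ_lt_gam (by omega) (hpos 1 h1 hdj.1) (hq j (mem_Icc.2 ⟨hj, by omega⟩)))
  have hγ_eq : gam n q t (dj + 1) j = gam n q t (dj + 1) (j + 1) := by
    rw [gam_eq_mul_add_gam_succ q t _ (by omega), hzero _ (mem_Icc.2 ⟨by omega, by omega⟩)
      (by omega), zero_mul, zero_add]
  have hdj_succ : dj + 1 ∈ Icc 1 dj' := mem_Icc.2 ⟨by omega, by omega⟩
  refine lt_irrefl (M 1 * W l m (gam n q t 1 (j + 1))) ?_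
  calc M 1 * W l m (gam n q t 1 (j + 1))
      = M (dj + 1) * W l m (gam n q t (dj + 1) j) := by rw [hγ_eq, heq' _ hdj_succ]
    _ ≤ M dj * W l m (gam n q t dj j) := hchain dj le_rfl (by omega)
    _ = M 1 * W l m (gam n q t 1 j) := heq dj (mem_Icc.2 ⟨hdj.1, le_rfl⟩)
    _ < M 1 * W l m (gam n q t 1 (j + 1)) := mul_lt_mul_of_pos_left hW (hMpos 1 h1)

theorem stmt2 (l m d n : ℕ) (hm : 1 ≤ m) (hml : m ≤ l - 1) (hd : 2 ≤ d) (hn : 1 ≤ n)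
    (M q : ℕ → ℝ)
    (hM : ∀ s ∈ Finset.Icc 1 d, ∀ r ∈ Finset.Icc 1 d, s ≤ r → M r ≤ M s)
    (hMpos : ∀ s ∈ Finset.Icc 1 d, 0 < M s)
    (hq : ∀ j ∈ Finset.Icc 1 n, 0 < q j)
    (hqsum : ∑ j ∈ Finset.Icc 1 n, q j < 1)
    (t : ℕ → ℕ → ℝ) (hsol : IsSolution l m d n M q t)
    (j : ℕ) (hj : 1 ≤ j) (hjn : j + 1 ≤ n) :
    ((Finset.Icc 1 d).filter (fun s => 0 < t s (j + 1))).card ≤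
      ((Finset.Icc 1 d).filter (fun s => 0 < t s j)).card :=
  stmt2_general l m d n hm hml M q hMpos hq hqsum t hsol j hj hjn
end

section
/- Let s and r be two nodes, each with node-selection probabilities, values γ, endpoints L and payoffs u defined as in the context, and let k ∈ {1,…,n}. If u_{s,k} > u_{r,k} and γ_{s,k} < γ_{r,k}, then the set {j ∈ {k,…,n} : α_{s,j} < α_{r,j}} is nonempty, and, denoting its minimum by i, we have u_{s,j} > u_{r,j} for every j with k ≤ j ≤ i. -/
/-- `γ_{a,i} = ∑_{j=i}^n α_{a,j}` for a node with selection probabilities `α`. -/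
noncomputable def gamN (n : ℕ) (α : ℕ → ℝ) (i : ℕ) : ℝ :=
  ∑ j ∈ Finset.Icc i n, α j

/-- The maximum expected payoff `u_{a,i} = (f_i(L_{a,i-1}) - c) · W(γ_{a,i})` at state `i`
for a node with selection probabilities `α` and lower endpoints `L`. -/
noncomputable def payoff (l m n : ℕ) (c : ℝ) (f : ℕ → ℝ → ℝ)
    (α : ℕ → ℝ) (L : ℕ → ℝ) (i : ℕ) : ℝ :=
  (f i (L (i - 1)) - c) * W l m (gamN n α i)


/-! The recurrence for `L` says `u_j = (f_j(L_j) - c) W(γ_{j+1})`, while by definition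
`u_{j+1} = (f_{j+1}(L_j) - c) W(γ_{j+1})`. Below the first index `i ≥ k` with `αs i < αr i`
we have `αr j ≤ αs j`, so `γs j < γr j` propagates from `k` up to `i`, and `us > ur` propagates
with it: if `Ls_j ≤ Lr_j`, Assumption 1 makes the ratio `(f_{j+1} - c)/(f_j - c)` at `Ls_j` at
least the one at `Lr_j`; if `Ls_j > Lr_j`, then `f_{j+1}(Ls_j) > f_{j+1}(Lr_j)` and
`W(γs_{j+1}) ≥ W(γr_{j+1})`, because `W` decreases on `[0, 1]`: the derivative of the binomial
tail `w` is `(l - 1)` times a Bernstein polynomial. -/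

open Finset Polynomial

lemma derivative_sum_bernsteinPolynomial_Icc {R : Type*} [CommRing R] (N : ℕ) {m : ℕ}
    (hm : 1 ≤ m) :
    derivative (∑ i ∈ Icc m N, bernsteinPolynomial R N i) =
      N * bernsteinPolynomial R (N - 1) (m - 1) := by
  obtain ⟨m, rfl⟩ : ∃ m', m = m' + 1 := ⟨m - 1, by omega⟩
  rw [← Ico_add_one_right_eq_Icc, ← sum_Ico_add', derivative_sum, Nat.add_sub_cancel]
  simp only [bernsteinPolynomial.derivative_succ, ← mul_sum]
  rcases Nat.eq_zero_or_pos N with rfl | hN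
  · simp
  congr 1
  rcases le_or_gt m N with hmN | hNm
  · have htel := sum_Ico_sub (fun ν => bernsteinPolynomial R (N - 1) ν) hmN
    rw [sum_sub_distrib] at htel ⊢
    rw [bernsteinPolynomial.eq_zero_of_lt R (show N - 1 < N by omega)] at htel
    linear_combination -htel
  · rw [Ico_eq_empty_of_le hNm.le, sum_empty,
      bernsteinPolynomial.eq_zero_of_lt R (show N - 1 < m by omega)]

lemma bernsteinPolynomial_eval_nonneg (n ν : ℕ) {x : ℝ} (hx0 : 0 ≤ x) (hx1 : x ≤ 1) :
    0 ≤ (bernsteinPolynomial ℝ n ν).eval x := by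
  have : 0 ≤ 1 - x := by linarith
  simp only [bernsteinPolynomial, eval_mul, eval_pow, eval_sub, eval_one, eval_X, eval_natCast]
  positivity

lemma w_eq_eval (l m : ℕ) :
    w l m = fun x => (∑ i ∈ Icc m (l - 1), bernsteinPolynomial ℝ (l - 1) i).eval x := by
  ext x
  simp [w, bernsteinPolynomial, eval_finsetSum]

lemma w_monotoneOn (l : ℕ) {m : ℕ} (hm : 1 ≤ m) : MonotoneOn (w l m) (Set.Icc 0 1) := by
  set p := ∑ i ∈ Icc m (l - 1), bernsteinPolynomial ℝ (l - 1) i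
  rw [w_eq_eval]
  refine monotoneOn_of_deriv_nonneg (convex_Icc 0 1) p.continuousOn p.differentiableOn ?_
  intro x hx
  rw [interior_Icc] at hx
  rw [Polynomial.deriv, derivative_sum_bernsteinPolynomial_Icc _ hm, eval_mul, eval_natCast]
  exact mul_nonneg (Nat.cast_nonneg _) (bernsteinPolynomial_eval_nonneg _ _ hx.1.le hx.2.le)

lemma W_antitoneOn (l : ℕ) {m : ℕ} (hm : 1 ≤ m) : AntitoneOn (W l m) (Set.Icc 0 1) :=
  fun _ hx _ hy hxy => sub_le_sub_left (w_monotoneOn l hm hx hy hxy) 1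

lemma W_pos (l : ℕ) {m : ℕ} (hm : 1 ≤ m) {x : ℝ} (hx : x ∈ Set.Ico 0 1) : 0 < W l m x := by
  obtain ⟨hx0, hx1⟩ := hx
  set N := l - 1
  have hb : ∀ i, 0 ≤ (bernsteinPolynomial ℝ N i).eval x :=
    fun i => bernsteinPolynomial_eval_nonneg N i hx0 hx1.le
  have htotal : (bernsteinPolynomial ℝ N 0).eval x
      + ∑ i ∈ Icc 1 N, (bernsteinPolynomial ℝ N i).eval x = 1 := by
    have h := sum_eq_sum_Ico_succ_bot N.succ_pos fun i => (bernsteinPolynomial ℝ N i).eval x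
    rw [← range_eq_Ico, ← eval_finsetSum, bernsteinPolynomial.sum, eval_one, zero_add,
      Nat.succ_eq_add_one, Ico_add_one_right_eq_Icc] at h
    exact h.symm
  have hfirst : 0 < (bernsteinPolynomial ℝ N 0).eval x := by
    simp only [bernsteinPolynomial, Nat.choose_zero_right, Nat.cast_one, pow_zero, one_mul,
      Nat.sub_zero, eval_pow, eval_sub, eval_one, eval_X]
    exact pow_pos (by linarith) N
  have htail : w l m x ≤ ∑ i ∈ Icc 1 N, (bernsteinPolynomial ℝ N i).eval x := by
    simp only [w_eq_eval, eval_finsetSum]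
    exact sum_le_sum_of_subset_of_nonneg (Icc_subset_Icc_left hm) fun i _ _ => hb i
  rw [W]
  linarith

lemma gamN_succ (n : ℕ) (α : ℕ → ℝ) {j : ℕ} (h : j ≤ n) :
    gamN n α j = α j + gamN n α (j + 1) := by
  rw [gamN, gamN, Icc_add_one_left_eq_Ioc, ← sum_insert left_notMem_Ioc, Ioc_insert_left h]

lemma gamN_mem_Ico {n : ℕ} {α : ℕ → ℝ} (h0 : ∀ j ∈ Icc 1 n, 0 ≤ α j)
    (hsum : ∑ j ∈ Icc 1 n, α j < 1) {t : ℕ} (ht : 1 ≤ t) : gamN n α t ∈ Set.Ico 0 1 := by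
  have hsub : Icc t n ⊆ Icc 1 n := Icc_subset_Icc_left ht
  refine ⟨sum_nonneg fun j hj => h0 j (hsub hj), lt_of_le_of_lt ?_ hsum⟩
  exact sum_le_sum_of_subset_of_nonneg hsub fun j hj _ => h0 j hj

lemma gamN_succ_lt_of_le {n j : ℕ} {α β : ℕ → ℝ} (hj : j ≤ n) (hαβ : β j ≤ α j)
    (h : gamN n α j < gamN n β j) : gamN n α (j + 1) < gamN n β (j + 1) := by
  rw [gamN_succ n α hj, gamN_succ n β hj] at h
  linarith

lemma exists_lt_of_gamN_lt {n k : ℕ} {α β : ℕ → ℝ} (h : gamN n α k < gamN n β k) :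
    ∃ j, k ≤ j ∧ j ≤ n ∧ α j < β j := by
  obtain ⟨j, hj, hlt⟩ := exists_lt_of_sum_lt h
  exact ⟨j, (mem_Icc.1 hj).1, (mem_Icc.1 hj).2, hlt⟩

lemma cost_lt_penalty {l m n : ℕ} {c v : ℝ} {f : ℕ → ℝ → ℝ} {α L : ℕ → ℝ}
    (hford : ∀ i ∈ Icc 1 n, ∀ j ∈ Icc 1 n, i < j → ∀ x : ℝ, f i x < f j x)
    (hfv : c < f 1 v) (hL0 : L 0 = v)
    (hLrec : ∀ i ∈ Icc 1 n,
      (f i (L i) - c) * W l m (gamN n α (i + 1)) = (f i (L (i - 1)) - c) * W l m (gamN n α i))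
    (hW : ∀ t, 1 ≤ t → 0 < W l m (gamN n α t)) {i : ℕ} (hi : i ∈ Icc 1 n) : c < f i (L i) := by
  have hnext : ∀ i ∈ Icc 1 n, c < f i (L (i - 1)) → c < f i (L i) := fun i hi h => by
    have hrhs := mul_pos (sub_pos.2 h) (hW i (mem_Icc.1 hi).1)
    rw [← hLrec i hi] at hrhs
    exact sub_pos.1 (pos_of_mul_pos_left hrhs (hW (i + 1) (by omega)).le)
  obtain ⟨hi1, hin⟩ := mem_Icc.1 hi
  induction i, hi1 using Nat.le_induction with
  | base => exact hnext 1 hi (by rwa [Nat.sub_self, hL0])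
  | succ i hi1 ih =>
    have hmem : i ∈ Icc 1 n := mem_Icc.2 ⟨hi1, by omega⟩
    refine hnext (i + 1) hi ?_
    rw [Nat.add_sub_cancel]
    exact (ih hmem (by omega)).trans (hford i hmem (i + 1) hi (by omega) (L i))

lemma sub_mul_lt_sub_mul_of_ratio {g h : ℝ → ℝ} {c xs xr Ws Wr : ℝ}
    (hgh : ∀ x, g x < h x) (hh : StrictMono h)
    (hratio : ∀ x y, y < x → c < g y → (g y - c) / (h y - c) < (g x - c) / (h x - c))
    (hs : c < g xs) (hr : c < g xr) (hWr : 0 < Wr) (hW : Wr ≤ Ws)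
    (hlt : (g xr - c) * Wr < (g xs - c) * Ws) : (h xr - c) * Wr < (h xs - c) * Ws := by
  have hbs : 0 < h xs - c := by linarith [hgh xs]
  rcases lt_or_ge xr xs with hrs | hsr
  · calc (h xr - c) * Wr < (h xs - c) * Wr := by gcongr; exact hh hrs
      _ ≤ (h xs - c) * Ws := by gcongr
  · have hbr : 0 < h xr - c := by linarith [hgh xr]
    have hcross : (g xs - c) * (h xr - c) ≤ (g xr - c) * (h xs - c) := by
      rw [← div_le_div_iff₀ hbs hbr]
      rcases hsr.eq_or_lt with heq | hlt'
      · rw [heq]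
      · exact (hratio _ _ hlt' hs).le
    nlinarith [mul_le_mul_of_nonneg_right hcross hWr.le, mul_lt_mul_of_pos_left hlt hbs]

theorem stmt14_general (l m n : ℕ) (hm : 1 ≤ m)
    (c v : ℝ) (f : ℕ → ℝ → ℝ)
    (hfm : ∀ j ∈ Finset.Icc 1 n, StrictMono (f j))
    (hford : ∀ i ∈ Finset.Icc 1 n, ∀ j ∈ Finset.Icc 1 n, i < j → ∀ x : ℝ, f i x < f j x)
    (hfv : c < f 1 v)
    (hassum : ∀ i ∈ Finset.Icc 1 n, ∀ j ∈ Finset.Icc 1 n, i < j →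
      ∀ x y : ℝ, y < x → c < f i y →
        (f i y - c) / (f j y - c) < (f i x - c) / (f j x - c))
    (αs αr : ℕ → ℝ)
    (hαs0 : ∀ j ∈ Finset.Icc 1 n, 0 ≤ αs j) (hαssum : ∑ j ∈ Finset.Icc 1 n, αs j < 1)
    (hαr0 : ∀ j ∈ Finset.Icc 1 n, 0 ≤ αr j) (hαrsum : ∑ j ∈ Finset.Icc 1 n, αr j < 1)
    (Ls Lr : ℕ → ℝ) (hLs0 : Ls 0 = v) (hLr0 : Lr 0 = v)
    (hLsrec : ∀ i ∈ Finset.Icc 1 n,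
      (f i (Ls i) - c) * W l m (gamN n αs (i + 1)) =
        (f i (Ls (i - 1)) - c) * W l m (gamN n αs i))
    (hLrrec : ∀ i ∈ Finset.Icc 1 n,
      (f i (Lr i) - c) * W l m (gamN n αr (i + 1)) =
        (f i (Lr (i - 1)) - c) * W l m (gamN n αr i))
    (k : ℕ) (hk1 : 1 ≤ k)
    (hu : payoff l m n c f αr Lr k < payoff l m n c f αs Ls k)
    (hγ : gamN n αs k < gamN n αr k) :
    ∃ i : ℕ, k ≤ i ∧ i ≤ n ∧ αs i < αr i ∧
      (∀ j : ℕ, k ≤ j → j ≤ n → αs j < αr j → i ≤ j) ∧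
      (∀ j : ℕ, k ≤ j → j ≤ i →
        payoff l m n c f αr Lr j < payoff l m n c f αs Ls j) := by
  have hγs t (ht : 1 ≤ t) := gamN_mem_Ico hαs0 hαssum ht
  have hγr t (ht : 1 ≤ t) := gamN_mem_Ico hαr0 hαrsum ht
  have hWs t (ht : 1 ≤ t) := W_pos l hm (hγs t ht)
  have hWr t (ht : 1 ≤ t) := W_pos l hm (hγr t ht)
  have hex := exists_lt_of_gamN_lt hγ
  obtain ⟨hki, hin, hαi⟩ := Nat.find_spec hex
  have hmin j (hkj : k ≤ j) (hjn : j ≤ n) (hα : αs j < αr j) : Nat.find hex ≤ j :=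
    Nat.find_min' hex ⟨hkj, hjn, hα⟩
  refine ⟨Nat.find hex, hki, hin, hαi, hmin, fun j hkj hji => ?_⟩
  suffices gamN n αs j < gamN n αr j ∧ payoff l m n c f αr Lr j < payoff l m n c f αs Ls j from
    this.2
  induction j, hkj using Nat.le_induction with
  | base => exact ⟨hγ, hu⟩
  | succ j hkj ih =>
    obtain ⟨hγj, huj⟩ := ih (by omega)
    have hj : j ∈ Icc 1 n := mem_Icc.2 ⟨by omega, by omega⟩
    have hj1 : j + 1 ∈ Icc 1 n := mem_Icc.2 ⟨by omega, by omega⟩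
    have hαj : αr j ≤ αs j := not_lt.1 fun h => by have := hmin j hkj (by omega) h; omega
    have hγj1 := gamN_succ_lt_of_le (by omega) hαj hγj
    refine ⟨hγj1, ?_⟩
    rw [payoff, payoff, ← hLsrec j hj, ← hLrrec j hj] at huj
    simp only [payoff, Nat.add_sub_cancel]
    exact sub_mul_lt_sub_mul_of_ratio (hford j hj (j + 1) hj1 (by omega)) (hfm (j + 1) hj1)
      (hassum j hj (j + 1) hj1 (by omega))
      (cost_lt_penalty hford hfv hLs0 hLsrec hWs hj)
      (cost_lt_penalty hford hfv hLr0 hLrrec hWr hj) (hWr (j + 1) (by omega))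
      (W_antitoneOn l hm (Set.Ico_subset_Icc_self (hγs _ (by omega)))
        (Set.Ico_subset_Icc_self (hγr _ (by omega))) hγj1.le) huj

theorem stmt14 (l m n : ℕ) (hm : 1 ≤ m) (hml : m ≤ l - 1) (hn : 1 ≤ n)
    (c v : ℝ) (f : ℕ → ℝ → ℝ)
    (hfc : ∀ j ∈ Finset.Icc 1 n, Continuous (f j))
    (hfm : ∀ j ∈ Finset.Icc 1 n, StrictMono (f j))
    (hfb : ∀ j ∈ Finset.Icc 1 n, Function.Bijective (f j))
    (hford : ∀ i ∈ Finset.Icc 1 n, ∀ j ∈ Finset.Icc 1 n, i < j → ∀ x : ℝ, f i x < f j x)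
    (hfv : c < f 1 v)
    (hassum : ∀ i ∈ Finset.Icc 1 n, ∀ j ∈ Finset.Icc 1 n, i < j →
      ∀ x y : ℝ, y < x → c < f i y →
        (f i y - c) / (f j y - c) < (f i x - c) / (f j x - c))
    (αs αr : ℕ → ℝ)
    (hαs0 : ∀ j ∈ Finset.Icc 1 n, 0 ≤ αs j) (hαssum : ∑ j ∈ Finset.Icc 1 n, αs j < 1)
    (hαr0 : ∀ j ∈ Finset.Icc 1 n, 0 ≤ αr j) (hαrsum : ∑ j ∈ Finset.Icc 1 n, αr j < 1)
    (Ls Lr : ℕ → ℝ) (hLs0 : Ls 0 = v) (hLr0 : Lr 0 = v)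
    (hLsrec : ∀ i ∈ Finset.Icc 1 n,
      (f i (Ls i) - c) * W l m (gamN n αs (i + 1)) =
        (f i (Ls (i - 1)) - c) * W l m (gamN n αs i))
    (hLrrec : ∀ i ∈ Finset.Icc 1 n,
      (f i (Lr i) - c) * W l m (gamN n αr (i + 1)) =
        (f i (Lr (i - 1)) - c) * W l m (gamN n αr i))
    (k : ℕ) (hk1 : 1 ≤ k) (hkn : k ≤ n)
    (hu : payoff l m n c f αr Lr k < payoff l m n c f αs Ls k)
    (hγ : gamN n αs k < gamN n αr k) :
    ∃ i : ℕ, k ≤ i ∧ i ≤ n ∧ αs i < αr i ∧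
      (∀ j : ℕ, k ≤ j → j ≤ n → αs j < αr j → i ≤ j) ∧
      (∀ j : ℕ, k ≤ j → j ≤ i →
        payoff l m n c f αr Lr j < payoff l m n c f αs Ls j) :=
  stmt14_general l m n hm c v f hfm hford hfv hassum αs αr hαs0 hαssum hαr0 hαrsum Ls Lr hLs0 hLr0
    hLsrec hLrrec k hk1 hu hγ
end
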